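/- arXiv:1807.02102 — 2 statements merged into one kernel-verified Lean document; each statement's English description precedes it below -/
import Mathlib

section
/- Every series-parallel pomset has a unique sequential factorisation: if U = V₁ · V₂ ⋯ Vₙ and U = W₁ · W₂ ⋯ Wₘ where all Vᵢ and Wⱼ are sequential primes, then n = m and Vᵢ = Wᵢ for all i. -/
namespace WBKA

/-- Series-parallel terms over an alphabet `A`. -/
inductive SPTerm (A : Type) : Type
  | one : SPTerm A
  | atom : A → SPTerm A
  | seq : SPTerm A → SPTerm A → SPTerm A
  | par : SPTerm A → SPTerm A → SPTerm A

/-- The congruence generated by the series-parallel pomset axioms: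
associativity of both compositions, commutativity of parallel composition,
and the empty pomset acting as unit for both. -/
inductive SPEquiv {A : Type} : SPTerm A → SPTerm A → Prop
  | refl (u : SPTerm A) : SPEquiv u u
  | symm {u v : SPTerm A} : SPEquiv u v → SPEquiv v u
  | trans {u v w : SPTerm A} : SPEquiv u v → SPEquiv v w → SPEquiv u w
  | seqCongr {u u' v v' : SPTerm A} :
      SPEquiv u u' → SPEquiv v v' → SPEquiv (u.seq v) (u'.seq v')
  | parCongr {u u' v v' : SPTerm A} :
      SPEquiv u u' → SPEquiv v v' → SPEquiv (u.par v) (u'.par v')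
  | seqAssoc (u v w : SPTerm A) : SPEquiv ((u.seq v).seq w) (u.seq (v.seq w))
  | parAssoc (u v w : SPTerm A) : SPEquiv ((u.par v).par w) (u.par (v.par w))
  | parComm (u v : SPTerm A) : SPEquiv (u.par v) (v.par u)
  | seqOneLeft (u : SPTerm A) : SPEquiv (SPTerm.one.seq u) u
  | seqOneRight (u : SPTerm A) : SPEquiv (u.seq SPTerm.one) u
  | parOne (u : SPTerm A) : SPEquiv (u.par SPTerm.one) u

instance spSetoid (A : Type) : Setoid (SPTerm A) :=
  ⟨SPEquiv, SPEquiv.refl, SPEquiv.symm, SPEquiv.trans⟩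

/-- Series-parallel pomsets over `A`, as the free algebra on the sp-pomset axioms. -/
def Pomset (A : Type) : Type := Quotient (spSetoid A)

namespace Pomset

variable {A : Type}

def mk (u : SPTerm A) : Pomset A := Quotient.mk (spSetoid A) u

/-- The empty pomset `1`. -/
def eps : Pomset A := mk SPTerm.one

/-- The primitive pomset consisting of a single event labelled `a`. -/
def atom (a : A) : Pomset A := mk (SPTerm.atom a)

/-- Sequential composition of pomsets. -/
def seq : Pomset A → Pomset A → Pomset A :=
  Quotient.lift₂ (fun u v => mk (u.seq v))
    (fun _ _ _ _ hu hv => Quotient.sound (SPEquiv.seqCongr hu hv))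

/-- Parallel composition of pomsets. -/
def par : Pomset A → Pomset A → Pomset A :=
  Quotient.lift₂ (fun u v => mk (u.par v))
    (fun _ _ _ _ hu hv => Quotient.sound (SPEquiv.parCongr hu hv))

/-- `U` is the empty pomset. -/
def IsEmptyP (U : Pomset A) : Prop := U = eps

/-- `U` is primitive: it consists of a single labelled event. -/
def Primitive (U : Pomset A) : Prop := ∃ a : A, U = atom a

/-- `U` is sequential: a sequential composition of two non-empty pomsets. -/
def Sequential (U : Pomset A) : Prop :=
  ∃ V W : Pomset A, V ≠ eps ∧ W ≠ eps ∧ U = seq V W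

/-- `U` is parallel: a parallel composition of two non-empty pomsets. -/
def Parallel (U : Pomset A) : Prop :=
  ∃ V W : Pomset A, V ≠ eps ∧ W ≠ eps ∧ U = par V W

/-- `U` is a sequential prime. -/
def SeqPrime (U : Pomset A) : Prop :=
  U ≠ eps ∧ ∀ V W : Pomset A, U = seq V W → V = eps ∨ W = eps

/-- `U` is a parallel prime. -/
def ParPrime (U : Pomset A) : Prop :=
  U ≠ eps ∧ ∀ V W : Pomset A, U = par V W → V = eps ∨ W = eps

/-- Sequential product of a list of pomsets. -/
def seqProd (l : List (Pomset A)) : Pomset A := l.foldr seq eps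

/-- Parallel product of a list of pomsets. -/
def parProd (l : List (Pomset A)) : Pomset A := l.foldr par eps

end Pomset

/-- Pointwise sequential composition of pomset languages. -/
def langSeq {A : Type} (L M : Set (Pomset A)) : Set (Pomset A) :=
  Set.image2 Pomset.seq L M

/-- Pointwise parallel composition of pomset languages. -/
def langPar {A : Type} (L M : Set (Pomset A)) : Set (Pomset A) :=
  Set.image2 Pomset.par L M

/-- `n`-fold sequential power of a language. -/
def langPow {A : Type} (L : Set (Pomset A)) : ℕ → Set (Pomset A)
  | 0 => {Pomset.eps}
  | n + 1 => langSeq L (langPow L n)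

/-- Kleene closure of a pomset language. -/
def langStar {A : Type} (L : Set (Pomset A)) : Set (Pomset A) :=
  ⋃ n : ℕ, langPow L n

/-- Series-rational expressions over `A`. -/
inductive SR (A : Type) : Type
  | zero : SR A
  | one : SR A
  | atom : A → SR A
  | plus : SR A → SR A → SR A
  | seq : SR A → SR A → SR A
  | par : SR A → SR A → SR A
  | star : SR A → SR A

/-- The sp-language semantics of series-rational expressions. -/
def sem {A : Type} : SR A → Set (Pomset A)
  | .zero => ∅
  | .one => {Pomset.eps}
  | .atom a => {Pomset.atom a}
  | .plus e f => sem e ∪ sem f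
  | .seq e f => langSeq (sem e) (sem f)
  | .par e f => langPar (sem e) (sem f)
  | .star e => langStar (sem e)

/-- The syntactic predicate `F` characterising acceptance of the empty pomset. -/
inductive EF {A : Type} : SR A → Prop
  | one : EF SR.one
  | plusLeft {e : SR A} (f : SR A) : EF e → EF (SR.plus e f)
  | plusRight (e : SR A) {f : SR A} : EF f → EF (SR.plus e f)
  | seq {e f : SR A} : EF e → EF f → EF (SR.seq e f)
  | par {e f : SR A} : EF e → EF f → EF (SR.par e f)
  | star (e : SR A) : EF (SR.star e)

/-- Pomset automata. -/
structure PA (A : Type) (Q : Type) where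
  acc : Set Q
  δ : Q → A → Set Q
  γ : Q → Multiset Q → Set Q

/-- The run relation of a pomset automaton. -/
inductive Run {A Q : Type} (M : PA A Q) : Q → Pomset A → Q → Prop
  | triv (q : Q) : Run M q Pomset.eps q
  | seqUnit {q : Q} {a : A} {q' : Q} :
      q' ∈ M.δ q a → Run M q (Pomset.atom a) q'
  | comp {q : Q} {U : Pomset A} {q'' : Q} {V : Pomset A} {q' : Q} :
      Run M q U q'' → Run M q'' V q' → Run M q (U.seq V) q'
  | parUnit {q q' : Q} (l : List (Q × Pomset A × Q)) :
      q' ∈ M.γ q (↑(l.map Prod.fst) : Multiset Q) →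
      (∀ x ∈ l, x.2.2 ∈ M.acc) →
      (∀ x ∈ l, Run M x.1 x.2.1 x.2.2) →
      Run M q (Pomset.parProd (l.map fun x => x.2.1)) q'

/-- Language of a state of a pomset automaton. -/
def PA.lang {A Q : Type} (M : PA A Q) (q : Q) : Set (Pomset A) :=
  {U | ∃ q' ∈ M.acc, Run M q U q'}

/-- The triple `q →^U q'` matches the trivial-run rule. -/
def TrivialRun {A Q : Type} (_M : PA A Q) (q : Q) (U : Pomset A) (q' : Q) : Prop :=
  U = Pomset.eps ∧ q = q'

/-- `q →^U q'` is a sequential unit run. -/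
def SeqUnitRun {A Q : Type} (M : PA A Q) (q : Q) (U : Pomset A) (q' : Q) : Prop :=
  ∃ a : A, U = Pomset.atom a ∧ q' ∈ M.δ q a

/-- `q →^U q'` is a parallel unit run. -/
def ParUnitRun {A Q : Type} (M : PA A Q) (q : Q) (U : Pomset A) (q' : Q) : Prop :=
  ∃ l : List (Q × Pomset A × Q),
    q' ∈ M.γ q (↑(l.map Prod.fst) : Multiset Q) ∧
    (∀ x ∈ l, x.2.2 ∈ M.acc ∧ Run M x.1 x.2.1 x.2.2) ∧
    U = Pomset.parProd (l.map fun x => x.2.1)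

/-- `q →^U q'` is a unit run: a sequential or a parallel unit run. -/
def UnitRun {A Q : Type} (M : PA A Q) (q : Q) (U : Pomset A) (q' : Q) : Prop :=
  SeqUnitRun M q U q' ∨ ParUnitRun M q U q'

/-- `q →^U q'` is a composite run: a sequential composition of two non-trivial runs. -/
def CompositeRun {A Q : Type} (M : PA A Q) (q : Q) (U : Pomset A) (q' : Q) : Prop :=
  ∃ (V W : Pomset A) (q'' : Q),
    U = V.seq W ∧ Run M q V q'' ∧ Run M q'' W q' ∧
    ¬ TrivialRun M q V q'' ∧ ¬ TrivialRun M q'' W q'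

/-- The support preorder: `Supports M q' q` means `q' ⪯ q`. -/
inductive Supports {A Q : Type} (M : PA A Q) : Q → Q → Prop
  | refl (q : Q) : Supports M q q
  | trans {q r p : Q} : Supports M q r → Supports M r p → Supports M q p
  | deltaStep {q : Q} {a : A} {q' : Q} : q' ∈ M.δ q a → Supports M q' q
  | gammaStep {q : Q} {φ : Multiset Q} {q' : Q} : q' ∈ M.γ q φ → Supports M q' q
  | forkStep {q : Q} {φ : Multiset Q} {r : Q} :
      r ∈ φ → (M.γ q φ).Nonempty → Supports M r q

/-- A pomset automaton is fork-acyclic when every fork target `r` of `q`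
satisfies `r ≺ q`, i.e. `q ⋠ r`. -/
def ForkAcyclic {A Q : Type} (M : PA A Q) : Prop :=
  ∀ (q : Q) (φ : Multiset Q) (r : Q),
    r ∈ φ → (M.γ q φ).Nonempty → ¬ Supports M q r

/-- A set of states is support-closed. -/
def SupportClosed {A Q : Type} (M : PA A Q) (S : Set Q) : Prop :=
  ∀ q ∈ S, ∀ q' : Q, Supports M q' q → q' ∈ S

/-- Restriction of a pomset automaton to a set of states. -/
def PA.restrict {A Q : Type} (M : PA A Q) (S : Set Q) : PA A {q : Q // q ∈ S} where
  acc := {q | q.val ∈ M.acc}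
  δ := fun q a => {r | r.val ∈ M.δ q.val a}
  γ := fun q φ => {r | r.val ∈ M.γ q.val (φ.map Subtype.val)}

/-- `n`-forking automata. -/
def NForking {A Q : Type} (M : PA A Q) (n : ℕ) : Prop :=
  ∀ (q : Q) (φ : Multiset Q), (M.γ q φ).Nonempty → n ≤ Multiset.card φ

/-- Parsimonious automata: no fork target accepts the empty pomset. -/
def Parsimonious {A Q : Type} (M : PA A Q) : Prop :=
  ∀ (p : Q) (φ : Multiset Q) (q : Q),
    q ∈ φ → (M.γ p φ).Nonempty → Pomset.eps ∉ M.lang q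

/-- Flat-branching automata: forks from fork targets never reach accepting states. -/
def FlatBranching {A Q : Type} (M : PA A Q) : Prop :=
  ∀ (p : Q) (φ : Multiset Q) (q : Q),
    q ∈ φ → (M.γ p φ).Nonempty → ∀ ψ : Multiset Q, M.γ q ψ ∩ M.acc = ∅

/-- Well-structured pomset automata. -/
def WellStructured {A Q : Type} (M : PA A Q) : Prop :=
  (∀ (q : Q) (φ : Multiset Q), (M.γ q φ).Nonempty → 2 ≤ Multiset.card φ) ∧
  ∀ (p : Q) (φ : Multiset Q) (q : Q), q ∈ φ → (M.γ p φ).Nonempty →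
    q ∉ M.acc ∧ ∀ ψ : Multiset Q, M.γ q ψ ∩ M.acc = ∅

/-- The relation `⇝` characterising runs labelled by the empty pomset. -/
inductive Leadsto {A Q : Type} (M : PA A Q) : Q → Q → Prop
  | refl (p : Q) : Leadsto M p p
  | trans {p r q : Q} : Leadsto M p r → Leadsto M r q → Leadsto M p q
  | fork {p q : Q} (l : List (Q × Q)) :
      q ∈ M.γ p (↑(l.map Prod.fst) : Multiset Q) →
      (∀ x ∈ l, x.2 ∈ M.acc) →
      (∀ x ∈ l, Leadsto M x.1 x.2) →
      Leadsto M p q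

/-- Concatenate each expression of a set with `f` on the right. -/
def seqAfter {A : Type} (T : Set (SR A)) (f : SR A) : Set (SR A) :=
  (fun g => SR.seq g f) '' T

/-- Antimirov-style sequential derivatives of sr-expressions. -/
def deltaS {A : Type} : SR A → A → Set (SR A)
  | .zero, _ => ∅
  | .one, _ => ∅
  | .atom b, a => {g | g = SR.one ∧ a = b}
  | .plus e f, a => deltaS e a ∪ deltaS f a
  | .seq e f, a => seqAfter (deltaS e a) f ∪ {g | g ∈ deltaS f a ∧ EF e}
  | .par _ _, _ => ∅
  | .star e, a => seqAfter (deltaS e a) (SR.star e)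

/-- Antimirov-style parallel derivatives of sr-expressions. -/
def gammaS {A : Type} : SR A → Multiset (SR A) → Set (SR A)
  | .zero, _ => ∅
  | .one, _ => ∅
  | .atom _, _ => ∅
  | .plus e f, φ => gammaS e φ ∪ gammaS f φ
  | .seq e f, φ => seqAfter (gammaS e φ) f ∪ {g | g ∈ gammaS f φ ∧ EF e}
  | .par e f, φ => {g | g = SR.one ∧ φ = {e, f}}
  | .star e, φ => seqAfter (gammaS e φ) (SR.star e)

/-- The syntactic pomset automaton on sr-expressions. -/
def synPA (A : Type) : PA A (SR A) where
  acc := {e | EF e}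
  δ := deltaS
  γ := gammaS

/-- The parallel-nesting depth of an sr-expression. -/
def pdepth {A : Type} : SR A → ℕ
  | .zero => 0
  | .one => 0
  | .atom _ => 0
  | .plus e f => max (pdepth e) (pdepth f)
  | .seq e f => max (pdepth e) (pdepth f)
  | .par e f => max (pdepth e) (pdepth f) + 1
  | .star e => pdepth e

/-- A substitution `ζ : Σ → 2^{SP(Δ)}` is atomic. -/
def Atomic {A B : Type} (ζ : A → Set (Pomset B)) : Prop :=
  (∀ a : A, ∀ U ∈ ζ a, Pomset.SeqPrime U) ∧
  (∀ a b : A, (ζ a ∩ ζ b).Nonempty ↔ a = b)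

/-- Extension of a substitution to words. -/
def substWord {A B : Type} (ζ : A → Set (Pomset B)) : List A → Set (Pomset B)
  | [] => {Pomset.eps}
  | a :: w => langSeq (ζ a) (substWord ζ w)

/-- Extension of a substitution to word languages. -/
def substLang {A B : Type} (ζ : A → Set (Pomset B)) (L : Set (List A)) :
    Set (Pomset B) :=
  ⋃ w ∈ L, substWord ζ w

/-- `L_A(α)` for a set `α` of states: the atom language of `α`. -/
def atomLang {Q U : Type} (LA : Q → Set U) (α : Set Q) : Set U :=
  (⋂ q ∈ α, LA q) \ (⋃ (q : Q) (_ : q ∉ α), LA q)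

/-!
The sequential factorisation can be computed on terms: an atom is its own factor, a sequential
composition concatenates the factorisations of its parts, and a parallel composition of two
non-empty terms is a single factor. This respects the sp-pomset axioms, so it descends to a map
`Pomset.factor` that turns `seq` into `++` and is a right inverse of `seqProd`. Every component
`V` it produces satisfies `factor V = [V]`; hence a sequential prime `U`, whose factorisation
cannot have two non-empty parts, satisfies `factor U = [U]`, and `factor` recovers a list of
primes from its product.
-/

namespace Pomset

variable {A : Type}

theorem eps_seq (U : Pomset A) : eps.seq U = U :=
  Quotient.inductionOn U fun u => Quotient.sound (.seqOneLeft u)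

theorem seq_eps (U : Pomset A) : U.seq eps = U :=
  Quotient.inductionOn U fun u => Quotient.sound (.seqOneRight u)

theorem seq_assoc (U V W : Pomset A) : (U.seq V).seq W = U.seq (V.seq W) :=
  Quotient.inductionOn₃ U V W fun u v w => Quotient.sound (.seqAssoc u v w)

@[simp]
theorem seqProd_nil : seqProd ([] : List (Pomset A)) = eps := rfl

@[simp]
theorem seqProd_cons (V : Pomset A) (l : List (Pomset A)) :
    seqProd (V :: l) = V.seq (seqProd l) := rfl

theorem seqProd_append (l₁ l₂ : List (Pomset A)) :
    seqProd (l₁ ++ l₂) = (seqProd l₁).seq (seqProd l₂) := by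
  induction l₁ with
  | nil => exact (eps_seq _).symm
  | cons V l ih => rw [List.cons_append, seqProd_cons, seqProd_cons, ih, seq_assoc]

end Pomset

namespace SPTerm

variable {A : Type}

def size : SPTerm A → ℕ
  | one => 0
  | atom _ => 1
  | seq u v => size u + size v
  | par u v => size u + size v

theorem size_eq_of_equiv {u v : SPTerm A} (h : SPEquiv u v) : size u = size v := by
  induction h <;> (try simp only [size] at *) <;> omega

theorem equiv_one_of_size_eq_zero {u : SPTerm A} (hu : size u = 0) : SPEquiv u one := by
  induction u with
  | one => exact .refl _
  | atom _ => simp [size] at hu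
  | seq u v ihu ihv =>
    simp only [size, Nat.add_eq_zero_iff] at hu
    exact (SPEquiv.seqCongr (ihu hu.1) (ihv hu.2)).trans (.seqOneLeft _)
  | par u v ihu ihv =>
    simp only [size, Nat.add_eq_zero_iff] at hu
    exact (SPEquiv.parCongr (ihu hu.1) (ihv hu.2)).trans (.parOne _)

theorem par_equiv_left {u v : SPTerm A} (hv : size v = 0) : SPEquiv (u.par v) u :=
  (SPEquiv.parCongr (.refl u) (equiv_one_of_size_eq_zero hv)).trans (.parOne u)

theorem par_equiv_right {u v : SPTerm A} (hu : size u = 0) : SPEquiv (u.par v) v :=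
  (SPEquiv.parComm u v).trans (par_equiv_left hu)

def factor : SPTerm A → List (Pomset A)
  | one => []
  | atom a => [Pomset.atom a]
  | seq u v => factor u ++ factor v
  | par u v =>
    if size u = 0 then factor v
    else if size v = 0 then factor u
    -- a parallel composition of two non-empty terms is sequentially prime
    else [Pomset.mk (u.par v)]

theorem factor_eq_nil_of_size_eq_zero {u : SPTerm A} (hu : size u = 0) : factor u = [] := by
  induction u with
  | one => rfl
  | atom _ => simp [size] at hu
  | seq u v ihu ihv =>
    simp only [size, Nat.add_eq_zero_iff] at hu
    simp [factor, ihu hu.1, ihv hu.2]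
  | par u v ihu ihv =>
    simp only [size, Nat.add_eq_zero_iff] at hu
    simp [factor, hu.1, ihv hu.2]

theorem factor_eq_of_equiv {u v : SPTerm A} (h : SPEquiv u v) : factor u = factor v := by
  have mk_eq {u v : SPTerm A} (h : SPEquiv u v) : [Pomset.mk u] = [Pomset.mk v] :=
    congrArg (fun x => [x]) (Quotient.sound h)
  induction h with
  | refl => rfl
  | symm _ ih => exact ih.symm
  | trans _ _ ih₁ ih₂ => exact ih₁.trans ih₂
  | seqCongr _ _ ih₁ ih₂ => simp only [factor, ih₁, ih₂]
  | parCongr h₁ h₂ ih₁ ih₂ =>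
    simp only [factor, size_eq_of_equiv h₁, size_eq_of_equiv h₂, ih₁, ih₂]
    split_ifs
    · rfl
    · rfl
    · exact mk_eq (.parCongr h₁ h₂)
  | seqAssoc => simp only [factor, List.append_assoc]
  | parAssoc u v w =>
    by_cases hu : size u = 0 <;> by_cases hv : size v = 0 <;> by_cases hw : size w = 0 <;>
      simp only [factor, size, hu, hv, hw, factor_eq_nil_of_size_eq_zero, Nat.add_eq_zero_iff,
        and_false, false_and, and_self, if_true, if_false]
    · exact mk_eq (.parCongr (par_equiv_right hu) (.refl w))
    · exact mk_eq (.parAssoc u v w)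
    · exact (mk_eq (.parCongr (.refl u) (par_equiv_left hw))).symm
    · exact mk_eq (.parAssoc u v w)
  | parComm u v =>
    by_cases hu : size u = 0 <;> by_cases hv : size v = 0 <;>
      simp only [factor, hu, hv, factor_eq_nil_of_size_eq_zero, if_true, if_false]
    exact mk_eq (.parComm u v)
  | seqOneLeft => simp [factor]
  | seqOneRight => simp [factor]
  | parOne u =>
    by_cases hu : size u = 0 <;> simp [factor, size, hu, factor_eq_nil_of_size_eq_zero]

theorem seqProd_factor (u : SPTerm A) : Pomset.seqProd (factor u) = Pomset.mk u := by
  induction u with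
  | one => rfl
  | atom a => exact Pomset.seq_eps (Pomset.atom a)
  | seq u v ihu ihv => rw [factor, Pomset.seqProd_append, ihu, ihv]; rfl
  | par u v ihu ihv =>
    simp only [factor]
    split_ifs with hu hv
    · exact ihv.trans (Quotient.sound (par_equiv_right hu).symm)
    · exact ihu.trans (Quotient.sound (par_equiv_left hv).symm)
    · exact Pomset.seq_eps (Pomset.mk _)

end SPTerm

namespace Pomset

variable {A : Type}

def factor : Pomset A → List (Pomset A) :=
  Quotient.lift SPTerm.factor fun _ _ => SPTerm.factor_eq_of_equiv

@[simp]
theorem factor_mk (u : SPTerm A) : factor (mk u) = u.factor := rfl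

@[simp]
theorem factor_eps : factor (eps : Pomset A) = [] := rfl

theorem factor_seq (U V : Pomset A) : factor (U.seq V) = factor U ++ factor V :=
  Quotient.inductionOn₂ U V fun _ _ => rfl

theorem seqProd_factor (U : Pomset A) : seqProd (factor U) = U :=
  Quotient.inductionOn U SPTerm.seqProd_factor

theorem factor_eq_singleton_of_mem_factor {U V : Pomset A} (hV : V ∈ factor U) :
    factor V = [V] := by
  induction U using Quotient.inductionOn with | h u =>
  induction u with
  | one => exact absurd hV List.not_mem_nil
  | atom a =>
    obtain rfl : V = atom a := List.mem_singleton.mp hV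
    rfl
  | seq u v ihu ihv =>
    rcases List.mem_append.mp hV with hV | hV
    · exact ihu hV
    · exact ihv hV
  | par u v ihu ihv =>
    change V ∈ SPTerm.factor (u.par v) at hV
    rw [SPTerm.factor] at hV
    split_ifs at hV with hu hv
    · exact ihv hV
    · exact ihu hV
    · obtain rfl := List.mem_singleton.mp hV
      simp only [factor_mk, SPTerm.factor, if_neg hu, if_neg hv]

theorem factor_seqProd {l : List (Pomset A)} (hl : ∀ V ∈ l, factor V = [V]) :
    factor (seqProd l) = l := by
  induction l with
  | nil => rfl
  | cons V l ih =>
    rw [seqProd_cons, factor_seq, hl V List.mem_cons_self,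
      ih fun W hW => hl W (List.mem_cons_of_mem V hW), List.singleton_append]

theorem SeqPrime.factor_eq {U : Pomset A} (hU : SeqPrime U) : factor U = [U] := by
  have hcomp : ∀ V ∈ factor U, factor V = [V] := fun _ => factor_eq_singleton_of_mem_factor
  have hprod := seqProd_factor U
  rcases hfac : factor U with _ | ⟨V, l⟩
  · exact absurd (hfac ▸ hprod).symm hU.1
  rw [hfac] at hcomp hprod
  have hV := hcomp V List.mem_cons_self
  have hl := factor_seqProd fun W hW => hcomp W (List.mem_cons_of_mem V hW)
  rcases hU.2 V (seqProd l) (seqProd_cons V l ▸ hprod.symm) with h | h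
  · simp [h] at hV
  · obtain rfl : l = [] := by rw [← hl, h, factor_eps]
    rw [← hprod, seqProd_cons, seqProd_nil, seq_eps]

end Pomset

/-- Sequential factorisations of sp-pomsets are unique: two sequences of
sequential primes with the same sequential product are equal. -/
theorem sequential_factorisation_unique {A : Type} (L M : List (Pomset A))
    (hL : ∀ V ∈ L, Pomset.SeqPrime V) (hM : ∀ W ∈ M, Pomset.SeqPrime W)
    (h : Pomset.seqProd L = Pomset.seqProd M) : L = M := by
  have hL' := Pomset.factor_seqProd fun V hV => (hL V hV).factor_eq
  have hM' := Pomset.factor_seqProd fun W hW => (hM W hW).factor_eq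
  rw [← hL', ← hM', h]

end WBKA
end

section
/- Let A = ⟨Q, F, δ, γ⟩ be a pomset automaton, q, q′ ∈ Q, and suppose q →^U_A q′ (a run labelled by sp-pomset U). Then there exist ℓ ≥ 0, states q = q₀, …, q_ℓ = q′, and sp-pomsets U₁, …, U_ℓ such that U = U₁ ⋯ U_ℓ (sequential product) and for all 1 ≤ i ≤ ℓ, q_{i−1} →^{Uᵢ}_A qᵢ is a unit run (either a sequential unit run via δ or a parallel unit run via γ). -/
namespace WBKA

section Aux

variable {A Q : Type}

lemma Pomset.eps_seq_s9 (U : Pomset A) : Pomset.seq Pomset.eps U = U := by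
  induction U using Quotient.inductionOn with
  | h u => exact Quotient.sound (SPEquiv.seqOneLeft u)

lemma Pomset.seq_eps_s9 (U : Pomset A) : Pomset.seq U Pomset.eps = U := by
  induction U using Quotient.inductionOn with
  | h u => exact Quotient.sound (SPEquiv.seqOneRight u)

lemma Pomset.seq_assoc_s9 (U V W : Pomset A) :
    Pomset.seq (Pomset.seq U V) W = Pomset.seq U (Pomset.seq V W) := by
  induction U using Quotient.inductionOn with
  | h u =>
    induction V using Quotient.inductionOn with
    | h v =>
      induction W using Quotient.inductionOn with
      | h w => exact Quotient.sound (SPEquiv.seqAssoc u v w)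

lemma Pomset.seqProd_append_s9 (l1 l2 : List (Pomset A)) :
    Pomset.seqProd (l1 ++ l2) = Pomset.seq (Pomset.seqProd l1) (Pomset.seqProd l2) := by
  induction l1 with
  | nil => simp [Pomset.seqProd, Pomset.eps_seq_s9]
  | cons a l ih =>
    simp only [List.cons_append, Pomset.seqProd, List.foldr_cons] at *
    rw [ih, Pomset.seq_assoc_s9]

/-- A chain of unit runs. -/
def ChainRun (M : PA A Q) : Q → List (Pomset A × Q) → Q → Prop
  | q, [], q' => q = q'
  | q, (U, r) :: L, q' => UnitRun M q U r ∧ ChainRun M r L q'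

lemma ChainRun.append {M : PA A Q} :
    ∀ {L1 L2 : List (Pomset A × Q)} {q r q' : Q},
      ChainRun M q L1 r → ChainRun M r L2 q' → ChainRun M q (L1 ++ L2) q'
  | [], _, q, r, q', h1, h2 => by cases h1; exact h2
  | (U, s) :: L, L2, q, r, q', h1, h2 => ⟨h1.1, ChainRun.append h1.2 h2⟩

lemma run_chain {M : PA A Q} {q : Q} {U : Pomset A} {q' : Q} (h : Run M q U q') :
    ∃ L : List (Pomset A × Q),
      U = Pomset.seqProd (L.map Prod.fst) ∧ ChainRun M q L q' := by
  induction h with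
  | triv q => exact ⟨[], rfl, rfl⟩
  | @seqUnit q a q' hq =>
    exact ⟨[(Pomset.atom a, q')],
      by simp [Pomset.seqProd, Pomset.seq_eps_s9],
      ⟨Or.inl ⟨a, rfl, hq⟩, rfl⟩⟩
  | comp h1 h2 ih1 ih2 =>
    obtain ⟨L1, hU1, hc1⟩ := ih1
    obtain ⟨L2, hU2, hc2⟩ := ih2
    exact ⟨L1 ++ L2,
      by rw [List.map_append, Pomset.seqProd_append_s9, ← hU1, ← hU2],
      hc1.append hc2⟩
  | @parUnit q q' l hγ hacc hrun ihrun =>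
    refine ⟨[(Pomset.parProd (l.map fun x => x.2.1), q')],
      by simp [Pomset.seqProd, Pomset.seq_eps_s9],
      Or.inr ⟨l, hγ, fun x hx => ⟨hacc x hx, hrun x hx⟩, rfl⟩, rfl⟩

lemma chain_last {M : PA A Q} :
    ∀ {L : List (Pomset A × Q)} {q q' : Q}, ChainRun M q L q' →
      ∀ (h : L.length < (q :: L.map Prod.snd).length),
        (q :: L.map Prod.snd).get ⟨L.length, h⟩ = q'
  | [], q, q', hc, _ => hc
  | (U, r) :: L, q, q', hc, h => chain_last hc.2 _

lemma chain_get {M : PA A Q} :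
    ∀ {L : List (Pomset A × Q)} {q q' : Q}, ChainRun M q L q' →
      ∀ (i : ℕ) (hi : i < L.length)
        (h1 : i < (q :: L.map Prod.snd).length)
        (h2 : i + 1 < (q :: L.map Prod.snd).length),
        UnitRun M ((q :: L.map Prod.snd).get ⟨i, h1⟩) (L.get ⟨i, hi⟩).1
          ((q :: L.map Prod.snd).get ⟨i + 1, h2⟩)
  | (U, r) :: L, q, q', hc, 0, hi, h1, h2 => hc.1
  | (U, r) :: L, q, q', hc, i + 1, hi, h1, h2 =>
      chain_get hc.2 i (by simpa using hi) (by simp at h1 ⊢; omega) (by simp at h2 ⊢; omega)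

end Aux

/-- Every run decomposes as a sequence of unit runs. -/
theorem run_deconstruct {A Q : Type} (M : PA A Q) {q : Q} {U : Pomset A} {q' : Q}
    (h : Run M q U q') :
    ∃ (ℓ : ℕ) (qs : Fin (ℓ + 1) → Q) (Us : Fin ℓ → Pomset A),
      qs 0 = q ∧ qs (Fin.last ℓ) = q' ∧
      U = Pomset.seqProd (List.ofFn Us) ∧
      ∀ i : Fin ℓ, UnitRun M (qs i.castSucc) (Us i) (qs i.succ) := by
  obtain ⟨L, hU, hc⟩ := run_chain h
  refine ⟨L.length,
      fun i => (q :: L.map Prod.snd).get (Fin.cast (by simp) i),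
      fun i => (L.get (Fin.cast rfl i)).1, rfl, ?_, ?_, ?_⟩
  · exact chain_last hc _
  · rw [hU]
    congr 1
    apply List.ext_getElem (by simp)
    intro i h1 h2
    simp
  · intro i
    exact chain_get hc i i.isLt _ _

end WBKA
end
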